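/- arXiv:1403.1898 — 9 statements merged into one kernel-verified Lean document; each statement's English description precedes it below -/
import Mathlib

section
/- Let A be a primitive axial algebra of Jordan type η generated by a set X of primitive axes of Jordan type η, and let ⟨·,·⟩ be a symmetric associative F-bilinear form on A such that ⟨a, a⟩ ≠ 0 for every a ∈ X. Let R = {r ∈ A : ⟨x, r⟩ = 0 for all x ∈ A} be the radical of the form. Then: (1) R is an ideal of A; (2) R ∩ X = ∅; and (3) for every ideal I of A, I ⊆ R if and only if I ∩ X = ∅. In particular R is the unique largest ideal of A containing none of the generating axes. -/
/-- The `lam`-eigenspace of the left-multiplication operator by `x`. -/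
def eigSp (F : Type*) {A : Type*} [Field F] [NonUnitalNonAssocCommRing A] [Module F A]
    [SMulCommClass F A A] (x : A) (lam : F) : Submodule F A where
  carrier := {y | x * y = lam • y}
  add_mem' := by
    intro y z hy hz
    simp only [Set.mem_setOf_eq] at *
    rw [mul_add, hy, hz, smul_add]
  zero_mem' := by simp
  smul_mem' := by
    intro c y hy
    simp only [Set.mem_setOf_eq] at *
    rw [mul_smul_comm, hy, smul_smul, smul_smul, mul_comm]

variable {F A : Type*} [Field F] [NonUnitalNonAssocCommRing A] [Module F A]
  [SMulCommClass F A A] [IsScalarTower F A A]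

/-- `a` is a primitive axis of Jordan type `η`:  it is an idempotent, `A` is the internal
direct sum of the `1`-, `0`- and `η`-eigenspaces of `ad_a` with `A_1(a) = F • a` (expressed
as unique decomposition `x = φ • a + α + γ`), `A_0(a)` is a subalgebra, and the
`ℤ/2`-grading fusion rules hold for `A₊(a) = A_1(a) + A_0(a)`, `A₋(a) = A_η(a)`. -/
structure IsPrimitiveAxis (η : F) (a : A) : Prop where
  idem : a * a = a
  prim : eigSp F a (1 : F) = Submodule.span F {a}
  decomp : ∀ x : A, ∃! t : F × A × A,
    t.2.1 ∈ eigSp F a (0 : F) ∧ t.2.2 ∈ eigSp F a η ∧ x = t.1 • a + t.2.1 + t.2.2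
  zz : ∀ y ∈ eigSp F a (0 : F), ∀ z ∈ eigSp F a (0 : F), y * z ∈ eigSp F a (0 : F)
  pp : ∀ y ∈ eigSp F a (1 : F) ⊔ eigSp F a (0 : F),
       ∀ z ∈ eigSp F a (1 : F) ⊔ eigSp F a (0 : F),
         y * z ∈ eigSp F a (1 : F) ⊔ eigSp F a (0 : F)
  pm : ∀ y ∈ eigSp F a (1 : F) ⊔ eigSp F a (0 : F), ∀ z ∈ eigSp F a η, y * z ∈ eigSp F a η
  mm : ∀ y ∈ eigSp F a η, ∀ z ∈ eigSp F a η,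
         y * z ∈ eigSp F a (1 : F) ⊔ eigSp F a (0 : F)

/-- `τ` is the Miyamoto map of the axis `a`:  the `F`-linear map which is the identity on
`A_1(a) ⊔ A_0(a)` and `-1` on `A_η(a)`. -/
def IsMiyamotoMap (η : F) (a : A) (τ : A →ₗ[F] A) : Prop :=
  (∀ y ∈ eigSp F a (1 : F) ⊔ eigSp F a (0 : F), τ y = y) ∧
  (∀ y ∈ eigSp F a η, τ y = -y)

/-- the radical of a symmetric associative form on a primitive axial algebra of
Jordan type `η` (with no generating axis isotropic) is an ideal, contains none of the
generating axes, and is the largest ideal with that property. -/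
theorem frobenius_radical_largest_ideal
    (h2 : (2 : F) ≠ 0) (η : F) (hη0 : η ≠ 0) (hη1 : η ≠ 1)
    (X : Set A) (haxes : ∀ a ∈ X, IsPrimitiveAxis η a)
    (hgen : NonUnitalAlgebra.adjoin F X = ⊤)
    (B : A →ₗ[F] A →ₗ[F] F)
    (hsymm : ∀ x y : A, B x y = B y x)
    (hassoc : ∀ x y z : A, B (x * y) z = B x (y * z))
    (hnondeg : ∀ a ∈ X, B a a ≠ 0)
    (R : Submodule F A) (hR : ∀ r : A, r ∈ R ↔ ∀ x : A, B x r = 0) :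
    (∀ y : A, ∀ r ∈ R, y * r ∈ R) ∧
    (∀ a ∈ X, a ∉ R) ∧
    (∀ I : Submodule F A, (∀ y : A, ∀ i ∈ I, y * i ∈ I) →
      (I ≤ R ↔ ∀ a ∈ X, a ∉ I)) := by
  refine ⟨?_, ?_, ?_⟩
  · intro y r hr
    rw [hR] at *
    intro x
    rw [← hassoc]
    exact hr _
  · intro a ha hmem
    exact hnondeg a ha (by rw [hsymm]; exact (hR a).mp hmem a)
  · intro I hI
    constructor
    · intro hle a ha haI
      exact hnondeg a ha (by rw [hsymm]; exact (hR a).mp (hle haI) a)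
    · intro hX
      -- key step: B a j = 0 for each axis a and j ∈ I
      have key : ∀ a ∈ X, ∀ i ∈ I, B a i = 0 := by
        intro a ha i hi
        obtain ⟨⟨φ, α, γ⟩, ⟨hα, hγ, hdec⟩, -⟩ := (haxes a ha).decomp i
        have hα' : a * α = 0 := by
          have : a * α = (0 : F) • α := hα
          simpa using this
        have hγ' : a * γ = η • γ := hγ
        have hidem := (haxes a ha).idem
        have hai : a * i = φ • a + η • γ := by
          rw [hdec, mul_add, mul_add, mul_smul_comm, hidem, hα', hγ', add_zero]
        have haai : a * (a * i) = φ • a + (η * η) • γ := by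
          rw [hai, mul_add, mul_smul_comm, hidem, mul_smul_comm, hγ', smul_smul]
        have hmemI : ((1 - η) * φ) • a ∈ I := by
          have h1 : a * i ∈ I := hI a i hi
          have h2 : a * (a * i) ∈ I := hI a _ h1
          have h3 : a * (a * i) - η • (a * i) ∈ I := I.sub_mem h2 (I.smul_mem η h1)
          have : a * (a * i) - η • (a * i) = ((1 - η) * φ) • a := by
            rw [haai, hai]
            rw [smul_add, smul_smul, smul_smul]
            module
          rwa [this] at h3
        have hφ : φ = 0 := by
          by_contra hφ
          have hne : (1 - η) * φ ≠ 0 := mul_ne_zero (sub_ne_zero.mpr (Ne.symm hη1)) hφ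
          have : a ∈ I := by
            have := I.smul_mem ((1 - η) * φ)⁻¹ hmemI
            rwa [smul_smul, inv_mul_cancel₀ hne, one_smul] at this
          exact hX a ha this
        have hBα : B a α = 0 := by
          have := hassoc a a α
          rw [hidem, hα'] at this
          simpa using this
        have hBγ : B a γ = 0 := by
          have := hassoc a a γ
          rw [hidem, hγ', map_smul] at this
          have h1η : (1 - η) * B a γ = 0 := by
            simp only [smul_eq_mul] at this
            linear_combination this
          rcases mul_eq_zero.mp h1η with h | h
          · exact absurd (sub_eq_zero.mp h).symm hη1
          · exact h
        rw [hdec, hφ, zero_smul, zero_add, map_add, hBα, hBγ, add_zero]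
      -- now extend to all of A via the generating set
      let U : NonUnitalSubalgebra F A :=
        { carrier := {x | ∀ j ∈ I, B x j = 0}
          add_mem' := by
            intro x y hx hy j hj
            rw [map_add, LinearMap.add_apply, hx j hj, hy j hj, add_zero]
          zero_mem' := by intro j hj; simp
          smul_mem' := by
            intro c x hx j hj
            rw [map_smul, LinearMap.smul_apply, hx j hj, smul_zero]
          mul_mem' := by
            intro x y hx hy j hj
            rw [hassoc]
            exact hx _ (hI y j hj) }
      have hXU : X ⊆ U := fun a ha j hj => key a ha j hj
      have htop : (⊤ : NonUnitalSubalgebra F A) ≤ U := by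
        rw [← hgen]
        exact NonUnitalAlgebra.adjoin_le hXU
      intro i hi
      rw [hR]
      intro x
      exact htop (by trivial) i hi
end

section
/- Assume A is generated as a nonunital F-subalgebra by two primitive axes a and b of Jordan type η, and set σ = a·b − η • a − η • b. Then: (1) a·b = φ_b(a) • b + η • γ_b(a) and a·b = φ_a(b) • a + η • γ_a(b); (2) σ = ((1−η)φ_b(a) − η) • b − η • α_b(a) and σ = ((1−η)φ_a(b) − η) • a − η • α_a(b); in particular σ ∈ (A_1(a) + A_0(a)) ∩ (A_1(b) + A_0(b)), so σ is fixed by both Miyamoto maps τ(a) and τ(b). -/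
variable {F A : Type*} [Field F] [NonUnitalNonAssocCommRing A] [Module F A]
  [SMulCommClass F A A] [IsScalarTower F A A]

/-- for a 2-generated primitive axial algebra of Jordan type `η` with
`σ = a·b − η•a − η•b`:  `a·b = φ_b(a)•b + η•γ_b(a)` (and symmetrically), and
`σ = ((1−η)φ_b(a) − η)•b − η•α_b(a)` (and symmetrically); in particular
`σ ∈ (A_1(a)+A_0(a)) ∩ (A_1(b)+A_0(b))`, so `σ` is fixed by `τ(a)` and `τ(b)`. -/
theorem sigma_in_plus_parts
    (h2 : (2 : F) ≠ 0) (η : F) (hη0 : η ≠ 0) (hη1 : η ≠ 1)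
    (a b : A) (ha : IsPrimitiveAxis η a) (hb : IsPrimitiveAxis η b)
    (hgen : NonUnitalAlgebra.adjoin F ({a, b} : Set A) = ⊤)
    (σ : A) (hσ : σ = a * b - η • a - η • b) :
    (∀ (φ : F) (α γ : A), α ∈ eigSp F b (0 : F) → γ ∈ eigSp F b η →
      a = φ • b + α + γ →
        a * b = φ • b + η • γ ∧ σ = ((1 - η) * φ - η) • b - η • α) ∧
    (∀ (φ : F) (α γ : A), α ∈ eigSp F a (0 : F) → γ ∈ eigSp F a η →
      b = φ • a + α + γ →
        a * b = φ • a + η • γ ∧ σ = ((1 - η) * φ - η) • a - η • α) ∧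
    σ ∈ (eigSp F a (1 : F) ⊔ eigSp F a (0 : F)) ⊓
        (eigSp F b (1 : F) ⊔ eigSp F b (0 : F)) ∧
    (∀ τ : A →ₗ[F] A, IsMiyamotoMap η a τ → τ σ = σ) ∧
    (∀ τ : A →ₗ[F] A, IsMiyamotoMap η b τ → τ σ = σ) := by

  -- main computation: decomposition of `x` w.r.t. axis `c` gives product and sigma formulas
  have key : ∀ (c x : A), IsPrimitiveAxis η c → ∀ (φ : F) (α γ : A),
      α ∈ eigSp F c (0 : F) → γ ∈ eigSp F c η → x = φ • c + α + γ →
      c * x = φ • c + η • γ ∧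
      x * c - η • x - η • c = ((1 - η) * φ - η) • c - η • α := by
    intro c x hc φ α γ hα hγ hdec
    have hα' : c * α = (0 : F) • α := hα
    have hγ' : c * γ = η • γ := hγ
    have hmul : c * x = φ • c + η • γ := by
      rw [hdec, mul_add, mul_add, mul_smul_comm, hc.idem, hα', hγ', zero_smul, add_zero]
    refine ⟨hmul, ?_⟩
    rw [mul_comm, hmul, hdec]
    module
  obtain ⟨⟨φb, αb, γb⟩, ⟨hαb, hγb, hdecb⟩, -⟩ := hb.decomp a
  obtain ⟨⟨φa, αa, γa⟩, ⟨hαa, hγa, hdeca⟩, -⟩ := ha.decomp b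
  have hb1 : b ∈ eigSp F b (1 : F) := by
    show b * b = (1 : F) • b
    rw [hb.idem, one_smul]
  have ha1 : a ∈ eigSp F a (1 : F) := by
    show a * a = (1 : F) • a
    rw [ha.idem, one_smul]
  have hσb : σ = ((1 - η) * φb - η) • b - η • αb := by
    have := (key b a hb φb αb γb hαb hγb hdecb).2
    rw [hσ]; exact this
  have hσa : σ = ((1 - η) * φa - η) • a - η • αa := by
    have h := (key a b ha φa αa γa hαa hγa hdeca).2
    rw [hσ, mul_comm a b, ← h]
    abel
  have hmemb : σ ∈ eigSp F b (1 : F) ⊔ eigSp F b (0 : F) := by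
    rw [hσb]
    exact sub_mem (Submodule.smul_mem _ _ (Submodule.mem_sup_left hb1))
      (Submodule.smul_mem _ _ (Submodule.mem_sup_right hαb))
  have hmema : σ ∈ eigSp F a (1 : F) ⊔ eigSp F a (0 : F) := by
    rw [hσa]
    exact sub_mem (Submodule.smul_mem _ _ (Submodule.mem_sup_left ha1))
      (Submodule.smul_mem _ _ (Submodule.mem_sup_right hαa))
  refine ⟨?_, ?_, ⟨hmema, hmemb⟩, fun τ hτ => hτ.1 σ hmema, fun τ hτ => hτ.1 σ hmemb⟩
  · intro φ α γ hα hγ hdec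
    have h := key b a hb φ α γ hα hγ hdec
    refine ⟨by rw [mul_comm]; exact h.1, ?_⟩
    rw [hσ]; exact h.2
  · intro φ α γ hα hγ hdec
    have h := key a b ha φ α γ hα hγ hdec
    refine ⟨h.1, ?_⟩
    rw [hσ, mul_comm a b, ← h.2]
    abel
end

section
/- Assume A is generated as a nonunital F-subalgebra by two primitive axes a and b of Jordan type η, and set σ = a·b − η • a − η • b. Then a·σ = ((1−η)φ_a(b) − η) • a and b·σ = ((1−η)φ_b(a) − η) • b. -/
variable {F A : Type*} [Field F] [NonUnitalNonAssocCommRing A] [Module F A]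
  [SMulCommClass F A A] [IsScalarTower F A A]

lemma key_sigma {F A : Type*} [Field F] [NonUnitalNonAssocCommRing A] [Module F A]
    [SMulCommClass F A A] (η φ : F) (a b α γ : A)
    (haa : a * a = a) (hα : a * α = (0 : F) • α) (hγ : a * γ = η • γ)
    (hb : b = φ • a + α + γ) :
    a * (a * b - η • a - η • b) = ((1 - η) * φ - η) • a := by
  subst hb
  simp only [mul_add, mul_sub, mul_smul_comm, haa, hα, hγ, zero_smul, smul_zero,
    add_zero, smul_add, smul_smul]
  module

/-- with `σ = a·b − η•a − η•b` one has
`a·σ = ((1−η)φ_a(b) − η)•a` and `b·σ = ((1−η)φ_b(a) − η)•b`. -/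
theorem axis_mul_sigma
    (h2 : (2 : F) ≠ 0) (η : F) (hη0 : η ≠ 0) (hη1 : η ≠ 1)
    (a b : A) (ha : IsPrimitiveAxis η a) (hb : IsPrimitiveAxis η b)
    (hgen : NonUnitalAlgebra.adjoin F ({a, b} : Set A) = ⊤)
    (σ : A) (hσ : σ = a * b - η • a - η • b) :
    (∀ (φ : F) (α γ : A), α ∈ eigSp F a (0 : F) → γ ∈ eigSp F a η →
      b = φ • a + α + γ → a * σ = ((1 - η) * φ - η) • a) ∧
    (∀ (φ : F) (α γ : A), α ∈ eigSp F b (0 : F) → γ ∈ eigSp F b η →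
      a = φ • b + α + γ → b * σ = ((1 - η) * φ - η) • b) := by
  subst hσ
  constructor
  · intro φ α γ hα hγ hbeq
    exact key_sigma η φ a b α γ ha.idem hα hγ hbeq
  · intro φ α γ hα hγ haeq
    have := key_sigma η φ b a α γ hb.idem hα hγ haeq
    rw [show a * b - η • a - η • b = b * a - η • b - η • a by rw [mul_comm]; abel]
    exact this
end

section
/- (Seress Lemma) Let p be a primitive axis of Jordan type η in A. Then for every x ∈ A and every y ∈ A_1(p) + A_0(p), one has p·(x·y) = (p·x)·y. -/
variable {F A : Type*} [Field F] [NonUnitalNonAssocCommRing A] [Module F A]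
  [SMulCommClass F A A] [IsScalarTower F A A]

/-- Seress Lemma: for a primitive axis `p` of Jordan type `η`, every
`x ∈ A` and every `y ∈ A_1(p) + A_0(p)` satisfy `p·(x·y) = (p·x)·y`. -/
theorem seress_lemma
    (h2 : (2 : F) ≠ 0) (η : F) (hη0 : η ≠ 0) (hη1 : η ≠ 1)
    (p : A) (hp : IsPrimitiveAxis η p) :
    ∀ x : A, ∀ y ∈ eigSp F p (1 : F) ⊔ eigSp F p (0 : F),
      p * (x * y) = (p * x) * y := by
  intro x y hy
  have mem_eig : ∀ (z : A) (lam : F), z ∈ eigSp F p lam ↔ p * z = lam • z := fun _ _ => Iff.rfl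
  -- decompose y = ψ • p + β with β ∈ A_0(p)
  obtain ⟨u, hu, β, hβ, huv⟩ := Submodule.mem_sup.mp hy
  rw [hp.prim] at hu
  obtain ⟨ψ, hψ⟩ := Submodule.mem_span_singleton.mp hu
  have hyuv : ψ • p + β = y := by rw [hψ]; exact huv
  -- decompose x = φ • p + α + γ
  obtain ⟨⟨φ, α, γ⟩, ⟨hα, hγ, hx⟩, -⟩ := hp.decomp x
  simp only at hx
  have hpp : p * p = p := hp.idem
  have hpα : p * α = 0 := by rw [(mem_eig α 0).mp hα, zero_smul]
  have hpβ : p * β = 0 := by rw [(mem_eig β 0).mp hβ, zero_smul]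
  have hpγ : p * γ = η • γ := (mem_eig γ η).mp hγ
  have hαβ : p * (α * β) = 0 := by
    rw [(mem_eig _ 0).mp (hp.zz α hα β hβ), zero_smul]
  have hγy : p * (γ * y) = η • (γ * y) := by
    rw [mul_comm γ y]; exact (mem_eig _ η).mp (hp.pm y hy γ hγ)
  have hpy : p * y = ψ • p := by
    rw [← hyuv, mul_add, mul_smul_comm, hpp, hpβ, add_zero]
  have hαy : α * y = α * β := by
    rw [← hyuv, mul_add, mul_smul_comm, mul_comm α p, hpα, smul_zero, zero_add]
  have e1 : p * (x * y) = (φ * ψ) • p + η • (γ * y) := by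
    rw [hx, add_mul, add_mul, smul_mul_assoc, hpy, hαy, mul_add, mul_add,
      mul_smul_comm, mul_smul_comm, hpp, hαβ, add_zero, hγy, smul_smul]
  have e2 : (p * x) * y = (φ * ψ) • p + η • (γ * y) := by
    have hpx : p * x = φ • p + η • γ := by
      rw [hx, mul_add, mul_add, mul_smul_comm, hpp, hpα, hpγ, add_zero]
    rw [hpx, add_mul, smul_mul_assoc, smul_mul_assoc, hpy, smul_smul]
  rw [e1, e2]
end

section
/- Assume A is generated as a nonunital F-subalgebra by two primitive axes a and b of Jordan type η, and set σ = a·b − η • a − η • b. Then φ_a(b) = φ_b(a), and, writing φ for this common value and π = (1−η)φ − η, one has (a·b)·σ = π • (a·b). -/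
variable {F A : Type*} [Field F] [NonUnitalNonAssocCommRing A] [Module F A]
  [SMulCommClass F A A] [IsScalarTower F A A]

lemma mem_eigSp {x y : A} {lam : F} : y ∈ eigSp F x lam ↔ x * y = lam • y := Iff.rfl

/-- Seress-type lemma: for `z ∈ A₊(a)`, `a * (z * y) = z * (a * y)`. -/
lemma seress {η : F} {a : A} (ha : IsPrimitiveAxis η a)
    {z : A} (hz : z ∈ eigSp F a (1 : F) ⊔ eigSp F a (0 : F)) (y : A) :
    a * (z * y) = z * (a * y) := by
  obtain ⟨u, hu, v, hv, rfl⟩ := Submodule.mem_sup.mp hz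
  rw [ha.prim, Submodule.mem_span_singleton] at hu
  obtain ⟨c, rfl⟩ := hu
  have hva : a * v = 0 := by rw [mem_eigSp.mp hv, zero_smul]
  have key : a * (v * y) = v * (a * y) := by
    obtain ⟨⟨t, y₀, yη⟩, ⟨hy₀, hyη, hy⟩, -⟩ := ha.decomp y
    have hay₀ : a * y₀ = 0 := by rw [mem_eigSp.mp hy₀, zero_smul]
    have hayη : a * yη = η • yη := mem_eigSp.mp hyη
    have h0 : a * (v * y₀) = 0 := by
      rw [mem_eigSp.mp (ha.zz v hv y₀ hy₀), zero_smul]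
    have hη' : a * (v * yη) = η • (v * yη) :=
      mem_eigSp.mp (ha.pm v (Submodule.mem_sup_right hv) yη hyη)
    have h1 : v * y = v * y₀ + v * yη := by
      rw [hy, mul_add, mul_add, mul_smul_comm, mul_comm v a, hva, smul_zero, zero_add]
    have h2 : a * y = t • a + η • yη := by
      rw [hy, mul_add, mul_add, mul_smul_comm, ha.idem, hay₀, add_zero, hayη]
    rw [h1, mul_add, h0, zero_add, hη', h2, mul_add, mul_smul_comm, mul_comm v a, hva,
      smul_zero, zero_add, mul_smul_comm]
  rw [add_mul, add_mul, smul_mul_assoc, smul_mul_assoc, mul_add, mul_smul_comm, key]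

/-- `φ_a(b) = φ_b(a)` and, with `π = (1−η)φ − η` for the common value `φ`,
`(a·b)·σ = π • (a·b)`. -/
theorem phi_symmetric_and_ab_mul_sigma
    (h2 : (2 : F) ≠ 0) (η : F) (hη0 : η ≠ 0) (hη1 : η ≠ 1)
    (a b : A) (ha : IsPrimitiveAxis η a) (hb : IsPrimitiveAxis η b)
    (hgen : NonUnitalAlgebra.adjoin F ({a, b} : Set A) = ⊤)
    (σ : A) (hσ : σ = a * b - η • a - η • b) :
    ∀ (φ₁ : F) (α₁ γ₁ : A), α₁ ∈ eigSp F a (0 : F) → γ₁ ∈ eigSp F a η →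
      b = φ₁ • a + α₁ + γ₁ →
    ∀ (φ₂ : F) (α₂ γ₂ : A), α₂ ∈ eigSp F b (0 : F) → γ₂ ∈ eigSp F b η →
      a = φ₂ • b + α₂ + γ₂ →
      φ₁ = φ₂ ∧ (a * b) * σ = ((1 - η) * φ₁ - η) • (a * b) := by
  intro φ₁ α₁ γ₁ hα₁ hγ₁ hb1 φ₂ α₂ γ₂ hα₂ hγ₂ ha2
  have haα₁ : a * α₁ = 0 := by rw [mem_eigSp.mp hα₁, zero_smul]
  have haγ₁ : a * γ₁ = η • γ₁ := mem_eigSp.mp hγ₁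
  have hbα₂ : b * α₂ = 0 := by rw [mem_eigSp.mp hα₂, zero_smul]
  have hbγ₂ : b * γ₂ = η • γ₂ := mem_eigSp.mp hγ₂
  have hab : a * b = φ₁ • a + η • γ₁ := by
    conv_lhs => rw [hb1]
    rw [mul_add, mul_add, mul_smul_comm, ha.idem, haα₁, add_zero, haγ₁]
  have hba : b * a = φ₂ • b + η • γ₂ := by
    conv_lhs => rw [ha2]
    rw [mul_add, mul_add, mul_smul_comm, hb.idem, hbα₂, add_zero, hbγ₂]
  have hσ1 : σ = ((1 - η) * φ₁ - η) • a + (-η) • α₁ := by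
    rw [hσ, hab, hb1]; module
  have hσ2 : σ = ((1 - η) * φ₂ - η) • b + (-η) • α₂ := by
    rw [hσ, mul_comm a b, hba, ha2]; module
  have hσa : σ * a = ((1 - η) * φ₁ - η) • a := by
    rw [hσ1, add_mul, smul_mul_assoc, ha.idem, smul_mul_assoc, mul_comm α₁ a, haα₁,
      smul_zero, add_zero]
  have hσb : σ * b = ((1 - η) * φ₂ - η) • b := by
    rw [hσ2, add_mul, smul_mul_assoc, hb.idem, smul_mul_assoc, mul_comm α₂ b, hbα₂,
      smul_zero, add_zero]
  have haa1 : a ∈ eigSp F a (1 : F) := mem_eigSp.mpr (by rw [ha.idem, one_smul])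
  have hbb1 : b ∈ eigSp F b (1 : F) := mem_eigSp.mpr (by rw [hb.idem, one_smul])
  have hσpa : σ ∈ eigSp F a (1 : F) ⊔ eigSp F a (0 : F) := by
    rw [hσ1]
    exact Submodule.add_mem _ (Submodule.mem_sup_left (Submodule.smul_mem _ _ haa1))
      (Submodule.mem_sup_right (Submodule.smul_mem _ _ hα₁))
  have hσpb : σ ∈ eigSp F b (1 : F) ⊔ eigSp F b (0 : F) := by
    rw [hσ2]
    exact Submodule.add_mem _ (Submodule.mem_sup_left (Submodule.smul_mem _ _ hbb1))
      (Submodule.mem_sup_right (Submodule.smul_mem _ _ hα₂))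
  have key1 : σ * (a * b) = ((1 - η) * φ₂ - η) • (a * b) := by
    have h := seress ha hσpa b
    rw [hσb, mul_smul_comm] at h
    exact h.symm
  have key2 : σ * (a * b) = ((1 - η) * φ₁ - η) • (a * b) := by
    have h := seress hb hσpb a
    rw [hσa, mul_smul_comm, mul_comm b a] at h
    exact h.symm
  refine ⟨?_, by rw [mul_comm, key2]⟩
  by_cases hab0 : a * b = 0
  · have h1 : φ₁ = 0 := by
      obtain ⟨t, -, huniq⟩ := ha.decomp 0
      have e1 := huniq (φ₁, 0, η • γ₁)
        ⟨Submodule.zero_mem _, Submodule.smul_mem _ _ hγ₁, by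
          rw [add_zero, ← hab, hab0]⟩
      have e2 := huniq (0, 0, 0) ⟨Submodule.zero_mem _, Submodule.zero_mem _, by simp⟩
      exact congrArg Prod.fst (e1.trans e2.symm)
    have h2 : φ₂ = 0 := by
      obtain ⟨t, -, huniq⟩ := hb.decomp 0
      have e1 := huniq (φ₂, 0, η • γ₂)
        ⟨Submodule.zero_mem _, Submodule.smul_mem _ _ hγ₂, by
          rw [add_zero, ← hba, mul_comm b a, hab0]⟩
      have e2 := huniq (0, 0, 0) ⟨Submodule.zero_mem _, Submodule.zero_mem _, by simp⟩
      exact congrArg Prod.fst (e1.trans e2.symm)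
    rw [h1, h2]
  · have hz : (((1 - η) * φ₁ - η) - ((1 - η) * φ₂ - η)) • (a * b) = 0 := by
      rw [sub_smul, ← key1, ← key2, sub_self]
    have hc : ((1 - η) * φ₁ - η) - ((1 - η) * φ₂ - η) = 0 := by
      by_contra hc
      exact hab0 (by
        calc a * b = (((1 - η) * φ₁ - η) - ((1 - η) * φ₂ - η))⁻¹ •
              ((((1 - η) * φ₁ - η) - ((1 - η) * φ₂ - η)) • (a * b)) :=
              (inv_smul_smul₀ hc _).symm
          _ = 0 := by rw [hz, smul_zero])
    have h1η : (1 : F) - η ≠ 0 := sub_ne_zero.mpr (Ne.symm hη1)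
    have hmul : (1 - η) * (φ₁ - φ₂) = 0 := by linear_combination hc
    exact sub_eq_zero.mp ((mul_eq_zero.mp hmul).resolve_left h1η)
end

section
/- Assume A is generated as a nonunital F-subalgebra by two primitive axes a and b of Jordan type η, and set σ = a·b − η • a − η • b and π = (1−η)φ_b(a) − η. Then σ·σ = π • σ. -/
variable {F A : Type*} [Field F] [NonUnitalNonAssocCommRing A] [Module F A]
  [SMulCommClass F A A] [IsScalarTower F A A]

lemma eig_mem_iff {b y : A} {lam : F} : y ∈ eigSp F b lam ↔ b * y = lam • y := Iff.rfl

/-- Key computational lemma: for two primitive axes `a`, `b` with mutual decompositions,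
`φ' * φ = φ * φ` and `η • α² = η • α − ((1−η)φ') • α`. -/
lemma key_axis (η : F) (hη1 : η ≠ 1) (a b : A) (ha : IsPrimitiveAxis η a)
    (hb : IsPrimitiveAxis η b) (φ φ' : F) (α γ α' γ' : A)
    (hα : α ∈ eigSp F b (0:F)) (hγ : γ ∈ eigSp F b η)
    (hdec : a = φ • b + α + γ)
    (hα' : α' ∈ eigSp F a (0:F)) (hγ' : γ' ∈ eigSp F a η)
    (hdec' : b = φ' • a + α' + γ') :
    φ' * φ = φ * φ ∧ η • (α * α) = η • α - ((1-η)*φ') • α := by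
  have hbb : b * b = b := hb.idem
  have haa : a * a = a := ha.idem
  have hbα : b * α = 0 := by have := eig_mem_iff.mp hα; simpa using this
  have hbγ : b * γ = η • γ := eig_mem_iff.mp hγ
  have haγ' : a * γ' = η • γ' := eig_mem_iff.mp hγ'
  -- decompose γ * γ
  obtain ⟨u, hu, δ, hδ, huδ⟩ := Submodule.mem_sup.mp (hb.mm γ hγ γ hγ)
  rw [hb.prim] at hu
  obtain ⟨c, hc⟩ := Submodule.mem_span_singleton.mp hu
  have hγγ : γ * γ = c • b + δ := by rw [← huδ, hc]
  -- α * γ lies in the η-eigenspace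
  have hw : α * γ ∈ eigSp F b η := hb.pm α (Submodule.mem_sup_right hα) γ hγ
  -- products with a
  have hab : a * b = φ • b + η • γ := by
    rw [hdec, add_mul, add_mul, smul_mul_assoc, hbb, mul_comm α b, hbα,
      mul_comm γ b, hbγ, add_zero]
  have haα : a * α = α * α + γ * α := by
    rw [hdec, add_mul, add_mul, smul_mul_assoc, hbα, smul_zero, zero_add]
  have haγ : a * γ = (φ * η) • γ + α * γ + (c • b + δ) := by
    rw [hdec, add_mul, add_mul, smul_mul_assoc, hbγ, hγγ, smul_smul]
  have hab' : a * b = φ' • a + η • γ' := by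
    rw [mul_comm, hdec', add_mul, add_mul, smul_mul_assoc, haa,
      mul_comm α' a, (by simpa using eig_mem_iff.mp hα' : a * α' = 0),
      mul_comm γ' a, haγ', add_zero]
  -- first uniqueness: a = a * a
  have haa2 : a * a = φ • (a * b) + a * α + a * γ := by
    nth_rewrite 2 [hdec]
    rw [mul_add, mul_add, mul_smul_comm]
  have e1 : (φ * φ + c, α * α + δ, (φ*η) • γ + (φ*η) • γ + (α*γ + α*γ)) = ((φ, α, γ) : F × A × A) := by
    refine (hb.decomp a).unique ⟨?_, ?_, ?_⟩ ⟨hα, hγ, hdec⟩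
    · exact add_mem (hb.zz α hα α hα) hδ
    · exact add_mem (add_mem (Submodule.smul_mem _ _ hγ) (Submodule.smul_mem _ _ hγ))
        (add_mem hw hw)
    · calc a = a * a := haa.symm
        _ = φ • (φ • b + η • γ) + (α * α + γ * α) + ((φ * η) • γ + α * γ + (c • b + δ)) := by
            rw [haa2, hab, haα, haγ]
        _ = _ := by rw [mul_comm γ α]; module
  have E1 : φ * φ + c = φ := congrArg Prod.fst e1
  have E2 : α * α + δ = α := congrArg (fun t => t.2.1) e1
  -- second uniqueness: a * (a * b) two ways
  have way1 : a * (a * b) = φ' • a + (η*η) • γ' := by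
    rw [hab', mul_add, mul_smul_comm, mul_smul_comm, haa, haγ', smul_smul]
  have hγ'elim : η • γ' = a * b - φ' • a := by rw [hab']; abel
  have way1' : a * (a * b) =
      (φ' * φ + η * φ - η * (φ' * φ)) • b + (φ' - η * φ') • α + (φ' + η*η - η*φ') • γ := by
    have : a * (a * b) = φ' • a + η • (a * b) - (η * φ') • a := by
      rw [way1, show (η*η) • γ' = η • (η • γ') from (smul_smul η η γ').symm, hγ'elim]
      rw [smul_sub, smul_smul]
      abel
    rw [this, hab, hdec]
    module
  have way2 : a * (a * b) =
      (φ * φ + η * c) • b + η • δ + ((φ * η + η * (φ * η)) • γ + η • (α * γ)) := by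
    have : a * (a * b) = φ • (a * b) + η • (a * γ) := by
      nth_rewrite 1 [hab]
      rw [mul_add, mul_smul_comm, mul_smul_comm]
    rw [this, hab, haγ]
    module
  have e2 : ((φ' * φ + η * φ - η * (φ' * φ), (φ' - η * φ') • α, (φ' + η*η - η*φ') • γ)
      : F × A × A) = (φ * φ + η * c, η • δ, (φ * η + η * (φ * η)) • γ + η • (α * γ)) := by
    refine (hb.decomp (a * (a * b))).unique ⟨?_, ?_, way1'⟩ ⟨?_, ?_, way2⟩
    · exact Submodule.smul_mem _ _ hα
    · exact Submodule.smul_mem _ _ hγ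
    · exact Submodule.smul_mem _ _ hδ
    · exact add_mem (Submodule.smul_mem _ _ hγ) (Submodule.smul_mem _ _ hw)
  have F1 : φ' * φ + η * φ - η * (φ' * φ) = φ * φ + η * c := congrArg Prod.fst e2
  have F2 : (φ' - η * φ') • α = η • δ := congrArg (fun t => t.2.1) e2
  constructor
  · -- from F1 and E1 (c = φ - φ*φ)
    have hc' : c = φ - φ * φ := by linear_combination E1
    rw [hc'] at F1
    have h1η : (1 : F) - η ≠ 0 := sub_ne_zero.mpr (Ne.symm hη1)
    have : (1 - η) * (φ' * φ) = (1 - η) * (φ * φ) := by linear_combination F1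
    exact mul_left_cancel₀ h1η this
  · -- from F2 and E2 (δ = α - α*α)
    have hδ' : δ = α - α * α := eq_sub_of_add_eq (by rw [add_comm]; exact E2)
    rw [hδ', smul_sub] at F2
    have h3 : ((1 - η) * φ') • α = (φ' - η * φ') • α := by module
    rw [h3, F2]
    abel

/-- with `σ = a·b − η•a − η•b` and `π = (1−η)φ_b(a) − η`, `σ·σ = π•σ`. -/
theorem sigma_sq
    (h2 : (2 : F) ≠ 0) (η : F) (hη0 : η ≠ 0) (hη1 : η ≠ 1)
    (a b : A) (ha : IsPrimitiveAxis η a) (hb : IsPrimitiveAxis η b)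
    (hgen : NonUnitalAlgebra.adjoin F ({a, b} : Set A) = ⊤)
    (σ : A) (hσ : σ = a * b - η • a - η • b) :
    ∀ (φ : F) (α γ : A), α ∈ eigSp F b (0 : F) → γ ∈ eigSp F b η →
      a = φ • b + α + γ → σ * σ = ((1 - η) * φ - η) • σ := by
  intro φ α γ hα hγ hdec
  obtain ⟨⟨φ', α', γ'⟩, ⟨hα', hγ', hdec'⟩, -⟩ := ha.decomp b
  obtain ⟨K1, K2⟩ := key_axis η hη1 a b ha hb φ φ' α γ α' γ' hα hγ hdec hα' hγ' hdec'
  obtain ⟨K1', -⟩ := key_axis η hη1 b a hb ha φ' φ α' γ' α γ hα' hγ' hdec' hα hγ hdec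
  have hφ : φ' = φ := by
    have h0 : (φ - φ') * (φ - φ') = 0 := by linear_combination -K1 - K1'
    exact (sub_eq_zero.mp (mul_self_eq_zero.mp h0)).symm
  subst hφ
  have hbb : b * b = b := hb.idem
  have hbα : b * α = 0 := by have := eig_mem_iff.mp hα; simpa using this
  have hbγ : b * γ = η • γ := eig_mem_iff.mp hγ
  have hab : a * b = φ' • b + η • γ := by
    rw [hdec, add_mul, add_mul, smul_mul_assoc, hbb, mul_comm α b, hbα,
      mul_comm γ b, hbγ, add_zero]
  set π := (1 - η) * φ' - η with hπ
  have hσb : σ = π • b - η • α := by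
    rw [hσ, hab, hdec, hπ]
    module
  have hσσ : σ * σ = (π * π) • b + (η * η) • (α * α) := by
    rw [hσb]
    simp only [sub_mul, mul_sub, smul_mul_assoc, mul_smul_comm, smul_smul]
    rw [hbb, hbα, mul_comm α b, hbα]
    simp only [smul_zero]
    module
  rw [hσσ, hσb, show (η * η) • (α * α) = η • (η • (α * α)) from (smul_smul η η (α*α)).symm, K2]
  rw [hπ]
  module
end

section
/- Assume A is generated as a nonunital F-subalgebra by two primitive axes a and b of Jordan type η. Then at least one of the following holds: (1) η = 1/2; (2) φ_a(b) = η/2; (3) a = b; (4) a·b = 0. -/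
variable {F A : Type*} [Field F] [NonUnitalNonAssocCommRing A] [Module F A]
  [SMulCommClass F A A] [IsScalarTower F A A]

/- ----------------  auxiliary lemmas  ---------------- -/

lemma mem_eigSp_iff {x : A} {lam : F} {y : A} : y ∈ eigSp F x lam ↔ x * y = lam • y :=
  Iff.rfl

lemma smul_cancel_ax {c : F} (hc : c ≠ 0) {v : A} (h : c • v = 0) : v = 0 := by
  have := congrArg (c⁻¹ • ·) h
  simpa [smul_smul, inv_mul_cancel₀ hc] using this

/-- Uniqueness of components of the eigen-decomposition. -/
lemma ext3 {η : F} {a : A} (ha : IsPrimitiveAxis η a) {φ₁ φ₂ : F} {α₁ α₂ γ₁ γ₂ : A}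
    (hα₁ : α₁ ∈ eigSp F a (0 : F)) (hγ₁ : γ₁ ∈ eigSp F a η)
    (hα₂ : α₂ ∈ eigSp F a (0 : F)) (hγ₂ : γ₂ ∈ eigSp F a η)
    (h : φ₁ • a + α₁ + γ₁ = φ₂ • a + α₂ + γ₂) :
    φ₁ = φ₂ ∧ α₁ = α₂ ∧ γ₁ = γ₂ := by
  obtain ⟨t, _, hu⟩ := ha.decomp (φ₁ • a + α₁ + γ₁)
  have h1 : ((φ₁, (α₁, γ₁)) : F × A × A) = t := hu _ ⟨hα₁, hγ₁, rfl⟩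
  have h2 : ((φ₂, (α₂, γ₂)) : F × A × A) = t := hu _ ⟨hα₂, hγ₂, h⟩
  have h3 := h1.trans h2.symm
  exact ⟨congrArg (·.1) h3, congrArg (·.2.1) h3, congrArg (·.2.2) h3⟩

/-- Splitting of an element of `A₁(a) ⊔ A₀(a)`. -/
lemma split_plus {η : F} {a : A} (ha : IsPrimitiveAxis η a) {x : A}
    (hx : x ∈ eigSp F a (1 : F) ⊔ eigSp F a (0 : F)) :
    ∃ s : F, ∃ β : A, β ∈ eigSp F a (0 : F) ∧ x = s • a + β := by
  rw [Submodule.mem_sup] at hx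
  obtain ⟨u, hu, v, hv, rfl⟩ := hx
  rw [ha.prim, Submodule.mem_span_singleton] at hu
  obtain ⟨s, rfl⟩ := hu
  exact ⟨s, v, hv, rfl⟩

/-- `a·b = φ•a + η•γ`. -/
lemma mul_ab {η : F} {a b : A} (ha : IsPrimitiveAxis η a) {φ : F} {α γ : A}
    (hα : α ∈ eigSp F a (0 : F)) (hγ : γ ∈ eigSp F a η) (hbd : b = φ • a + α + γ) :
    a * b = φ • a + η • γ := by
  have e1 : a * α = 0 := by simpa using (mem_eigSp_iff.mp hα)
  have e2 : a * γ = η • γ := mem_eigSp_iff.mp hγ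
  rw [hbd, mul_add, mul_add, mul_smul_comm, ha.idem, e1, e2, add_zero]

/-- The key relation:  if `b = φ•a + α + γ` and `a = φ'•b + α' + γ'` with `γ ≠ 0`, then
`2φ'(1-η) = 2ηφ + η - 2η²`. -/
lemma key_relation (h2 : (2 : F) ≠ 0) {η : F} {a b : A}
    (ha : IsPrimitiveAxis η a) (hb : IsPrimitiveAxis η b)
    {φ φ' : F} {α γ α' γ' : A}
    (hα : α ∈ eigSp F a (0 : F)) (hγ : γ ∈ eigSp F a η) (hbd : b = φ • a + α + γ)
    (hα' : α' ∈ eigSp F b (0 : F)) (hγ' : γ' ∈ eigSp F b η) (had : a = φ' • b + α' + γ')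
    (hγne : γ ≠ 0) :
    2 * (φ' * (1 - η)) = 2 * η * φ + η - 2 * (η * η) := by
  have e1 : a * α = 0 := by simpa using (mem_eigSp_iff.mp hα)
  have e2 : a * γ = η • γ := mem_eigSp_iff.mp hγ
  -- γ*γ lives in the plus part
  obtain ⟨s, β, hβ, hgg⟩ := split_plus ha (ha.mm γ hγ γ hγ)
  -- α*γ ∈ A_η
  have hαγmem : α * γ ∈ eigSp F a η := ha.pm α (Submodule.mem_sup_right hα) γ hγ
  -- expand b*b
  have hb2 : b * b = (φ * φ + s) • a + (α * α + β) +
      ((2 * (φ * η)) • γ + (2 : F) • (α * γ)) := by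
    rw [hbd]
    simp only [mul_add, add_mul, smul_mul_assoc, mul_smul_comm, ha.idem, e1, e2,
      mul_comm α a, mul_comm γ a, mul_comm γ α, hgg, smul_zero, smul_add, smul_smul,
      add_zero, zero_add]
    module
  -- from b*b = b extract the eigen components
  have hsplit := ext3 ha
    (Submodule.add_mem _ (ha.zz α hα α hα) hβ)
    (Submodule.add_mem _ (Submodule.smul_mem _ _ hγ) (Submodule.smul_mem _ _ hαγmem))
    hα hγ (hb2 ▸ (hb.idem.trans hbd))
  have hγeq : (2 * (φ * η)) • γ + (2 : F) • (α * γ) = γ := hsplit.2.2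
  -- solve for α*γ
  have hαγ : α * γ = (2⁻¹ * (1 - 2 * (φ * η))) • γ := by
    have h' : (2 : F) • (α * γ) = (1 - 2 * (φ * η)) • γ := by
      rw [sub_smul, one_smul]
      rw [eq_sub_iff_add_eq, add_comm]
      exact hγeq
    calc α * γ = (2⁻¹ : F) • ((2 : F) • (α * γ)) := by
          rw [smul_smul, inv_mul_cancel₀ h2, one_smul]
      _ = (2⁻¹ * (1 - 2 * (φ * η))) • γ := by rw [h', smul_smul]
  -- a*b both ways
  have hab : a * b = φ • a + η • γ := mul_ab ha hα hγ hbd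
  have hab' : a * b = φ' • b + η • γ' := by
    rw [mul_comm]; exact mul_ab hb hα' hγ' had
  -- compute b*(a*b) via the a-decomposition
  have hL : b * (a * b) = (φ * φ + η * s) • a + η • β +
      ((η * (2⁻¹ * (1 - 2 * (φ * η))) + φ * η * η + φ * η) • γ) := by
    rw [hab, hbd]
    simp only [mul_add, add_mul, smul_mul_assoc, mul_smul_comm, ha.idem, e1, e2,
      mul_comm α a, mul_comm γ a, hαγ, hgg, smul_zero, smul_add, smul_smul,
      add_zero, zero_add]
    module
  -- compute b*(a*b) via the b-decomposition
  have hbγ' : b * γ' = η • γ' := mem_eigSp_iff.mp hγ'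
  have hηγ' : η • γ' = a * b - φ' • b := by rw [hab']; abel
  have hR : b * (a * b) = (φ' * (1 - η) * φ + η * φ) • a + (φ' * (1 - η)) • α +
      ((φ' * (1 - η) + η * η) • γ) := by
    calc b * (a * b) = b * (φ' • b + η • γ') := by rw [hab']
      _ = φ' • (b * b) + η • (b * γ') := by rw [mul_add, mul_smul_comm, mul_smul_comm]
      _ = φ' • b + η • (η • γ') := by rw [hb.idem, hbγ']
      _ = φ' • b + η • (a * b - φ' • b) := by rw [hηγ']
      _ = _ := by
          rw [hab, hbd]
          module
  -- compare the γ-components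
  have hcmp := ext3 ha
    (Submodule.smul_mem _ _ hβ) (Submodule.smul_mem _ _ hγ)
    (Submodule.smul_mem _ _ hα) (Submodule.smul_mem _ _ hγ)
    (hL.symm.trans hR)
  have hc : (η * (2⁻¹ * (1 - 2 * (φ * η))) + φ * η * η + φ * η) • γ =
      (φ' * (1 - η) + η * η) • γ := hcmp.2.2
  have hzero : ((η * (2⁻¹ * (1 - 2 * (φ * η))) + φ * η * η + φ * η) -
      (φ' * (1 - η) + η * η)) • γ = 0 := by
    rw [sub_smul, hc, sub_self]
  have hcoef : (η * (2⁻¹ * (1 - 2 * (φ * η))) + φ * η * η + φ * η) -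
      (φ' * (1 - η) + η * η) = 0 := by
    by_contra hne
    exact hγne (smul_cancel_ax hne hzero)
  have h2inv : (2⁻¹ : F) * 2 = 1 := inv_mul_cancel₀ h2
  linear_combination (-2 : F) * hcoef + (η - 2 * η * (φ * η)) * h2inv

/-- Degenerate case: `b ∈ A₊(a)` (i.e. `γ = 0`). -/
lemma plus_case {η : F} {a b : A}
    (hη1 : η ≠ 1) (ha : IsPrimitiveAxis η a) (hb : IsPrimitiveAxis η b)
    {φ : F} {α : A} (hα : α ∈ eigSp F a (0 : F)) (hbd : b = φ • a + α) :
    a = b ∨ a * b = 0 := by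
  have hbd' : b = φ • a + α + 0 := by rw [add_zero]; exact hbd
  -- b² = b forces φ² = φ
  have hb2 : b * b = (φ * φ) • a + α * α + 0 := by
    have e1 : a * α = 0 := by simpa using (mem_eigSp_iff.mp hα)
    rw [hbd]
    simp only [mul_add, add_mul, smul_mul_assoc, mul_smul_comm, ha.idem, e1,
      mul_comm α a, smul_zero, smul_smul, add_zero, zero_add]
  have hsplit := ext3 ha (ha.zz α hα α hα) (Submodule.zero_mem _) hα (Submodule.zero_mem _)
    (hb2 ▸ (hb.idem.trans hbd'))
  have hφ2 : φ * φ = φ := hsplit.1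
  have hab : a * b = φ • a + η • (0 : A) :=
    mul_ab ha hα (Submodule.zero_mem _) hbd'
  have hφcase : φ = 0 ∨ φ = 1 := by
    have h : φ * (φ - 1) = 0 := by linear_combination hφ2
    rcases mul_eq_zero.mp h with h | h
    · exact Or.inl h
    · exact Or.inr (by linear_combination h)
  rcases hφcase with hφ | hφ
  · -- φ = 0 : a*b = 0
    right
    rw [hab, hφ, zero_smul, smul_zero, add_zero]
  · -- φ = 1 : a*b = a, and we show a = b or a*b = 0
    have haba : a * b = a := by rw [hab, hφ, one_smul, smul_zero, add_zero]
    obtain ⟨⟨φ', α', γ'⟩, ⟨hα', hγ', had⟩, _⟩ := hb.decomp a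
    have hba : b * a = φ' • b + η • γ' := mul_ab hb hα' hγ' had
    have ha2 : a = φ' • b + (0 : A) + η • γ' := by
      rw [← haba, mul_comm, hba, add_zero]
    have hext := ext3 hb (Submodule.zero_mem _) (Submodule.smul_mem _ _ hγ')
      hα' hγ' (ha2.symm.trans had)
    have hγ'0 : γ' = 0 := by
      have h : (η - 1) • γ' = 0 := by
        rw [sub_smul, one_smul, hext.2.2, sub_self]
      by_contra hne
      exact hne (smul_cancel_ax (sub_ne_zero.mpr hη1) h)
    have haφ' : a = φ' • b := by
      rw [had, ← hext.2.1, hγ'0, add_zero, add_zero]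
    by_cases hbz : b = 0
    · left
      rw [haφ', hbz, smul_zero]
    · have ha2' : (φ' * φ') • b = φ' • b := by
        calc (φ' * φ') • b = (φ' • b) * (φ' • b) := by
              rw [smul_mul_assoc, mul_smul_comm, hb.idem, smul_smul]
          _ = a * a := by rw [← haφ']
          _ = a := ha.idem
          _ = φ' • b := haφ'
      have hφ'2 : φ' * φ' = φ' := by
        by_contra hne
        have h : (φ' * φ' - φ') • b = 0 := by rw [sub_smul, ha2', sub_self]
        exact hbz (smul_cancel_ax (sub_ne_zero.mpr hne) h)
      have hφ'case : φ' = 0 ∨ φ' = 1 := by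
        have h : φ' * (φ' - 1) = 0 := by linear_combination hφ'2
        rcases mul_eq_zero.mp h with h | h
        · exact Or.inl h
        · exact Or.inr (by linear_combination h)
      rcases hφ'case with hφ' | hφ'
      · right
        rw [haφ', hφ', zero_smul, zero_mul]
      · left
        rw [haφ', hφ', one_smul]

/-- in a 2-generated primitive axial algebra of Jordan type `η`, either
`η = 1/2`, or `φ_a(b) = η/2`, or `a = b`, or `a·b = 0`. -/
theorem two_generated_dichotomy
    (h2 : (2 : F) ≠ 0) (η : F) (hη0 : η ≠ 0) (hη1 : η ≠ 1)
    (a b : A) (ha : IsPrimitiveAxis η a) (hb : IsPrimitiveAxis η b)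
    (hgen : NonUnitalAlgebra.adjoin F ({a, b} : Set A) = ⊤) :
    ∀ (φ : F) (α γ : A), α ∈ eigSp F a (0 : F) → γ ∈ eigSp F a η →
      b = φ • a + α + γ →
      η = 1 / 2 ∨ φ = η / 2 ∨ a = b ∨ a * b = 0 := by
  intro φ α γ hα hγ hbd
  obtain ⟨⟨φ', α', γ'⟩, ⟨hα', hγ', had⟩, _⟩ := hb.decomp a
  by_cases hγz : γ = 0
  · -- b ∈ A₊(a)
    have hbd' : b = φ • a + α := by rw [hbd, hγz, add_zero]
    rcases plus_case hη1 ha hb hα hbd' with h | h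
    · exact Or.inr (Or.inr (Or.inl h))
    · exact Or.inr (Or.inr (Or.inr h))
  · by_cases hγ'z : γ' = 0
    · -- a ∈ A₊(b)
      have had' : a = φ' • b + α' := by rw [had, hγ'z, add_zero]
      rcases plus_case hη1 hb ha hα' had' with h | h
      · exact Or.inr (Or.inr (Or.inl h.symm))
      · exact Or.inr (Or.inr (Or.inr (by rw [mul_comm]; exact h)))
    · -- both η-components nonzero:  the key relations
      have k1 := key_relation h2 ha hb hα hγ hbd hα' hγ' had hγz
      have k2 := key_relation h2 hb ha hα' hγ' had hα hγ hbd hγ'z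
      have hφφ' : φ = φ' := by
        have h : (2 : F) * (φ - φ') = 0 := by linear_combination k2 - k1
        rcases mul_eq_zero.mp h with h | h
        · exact absurd h h2
        · exact sub_eq_zero.mp h
      rw [← hφφ'] at k1
      have hmain : (1 - 2 * η) * (2 * φ - η) = 0 := by linear_combination k1
      rcases mul_eq_zero.mp hmain with h | h
      · left
        rw [eq_div_iff h2]
        linear_combination -h
      · right; left
        rw [eq_div_iff h2]
        linear_combination h
end

section
/- Let A be generated as a nonunital F-subalgebra by a set X of primitive axes of Jordan type η, and suppose X is closed under the Miyamoto maps: τ(b)(x) ∈ X for all b, x ∈ X. Then A is equal to the F-linear span of X. -/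
variable {F A : Type*} [Field F] [NonUnitalNonAssocCommRing A] [Module F A]
  [SMulCommClass F A A] [IsScalarTower F A A]

lemma exists_miyamoto (h2 : (2 : F) ≠ 0) {η : F} {a : A} (ha : IsPrimitiveAxis η a) :
    ∃ τ : A →ₗ[F] A, IsMiyamotoMap η a τ ∧
      ∀ x : A, ∃ φ : F, a * x = φ • a + ((2:F)⁻¹ * η) • (x - τ x) := by
  choose t ht htu using ha.decomp
  have hγ : ∀ x (φ : F) (α γ : A), α ∈ eigSp F a 0 → γ ∈ eigSp F a η →
      x = φ • a + α + γ → (t x).2.2 = γ := by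
    intro x φ α γ hα hγ hx
    have := htu x (φ, α, γ) ⟨hα, hγ, hx⟩
    rw [← this]
  refine ⟨{ toFun := fun x => x - (2:F) • (t x).2.2
            map_add' := ?_
            map_smul' := ?_ }, ⟨?_, ?_⟩, ?_⟩
  · intro x y
    have h : (t (x+y)).2.2 = (t x).2.2 + (t y).2.2 := by
      apply hγ (x+y) ((t x).1 + (t y).1) ((t x).2.1 + (t y).2.1)
      · exact Submodule.add_mem _ (ht x).1 (ht y).1
      · exact Submodule.add_mem _ (ht x).2.1 (ht y).2.1
      · rw [add_smul]
        conv_lhs => rw [(ht x).2.2, (ht y).2.2]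
        abel
    show x + y - (2:F) • (t (x+y)).2.2 =
      (x - (2:F) • (t x).2.2) + (y - (2:F) • (t y).2.2)
    rw [h, smul_add] ; abel
  · intro c x
    have h : (t (c • x)).2.2 = c • (t x).2.2 := by
      apply hγ (c • x) (c * (t x).1) (c • (t x).2.1)
      · exact Submodule.smul_mem _ _ (ht x).1
      · exact Submodule.smul_mem _ _ (ht x).2.1
      · conv_lhs => rw [(ht x).2.2]
        rw [smul_add, smul_add, smul_smul]
    show c • x - (2:F) • (t (c • x)).2.2 = c • (x - (2:F) • (t x).2.2)
    rw [h, smul_sub, smul_comm c ((2:F))]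
  · intro y hy
    obtain ⟨u, hu, v, hv, rfl⟩ := Submodule.mem_sup.mp hy
    rw [ha.prim, Submodule.mem_span_singleton] at hu
    obtain ⟨φ, rfl⟩ := hu
    have h : (t (φ • a + v)).2.2 = 0 := by
      apply hγ _ φ v 0 hv (Submodule.zero_mem _)
      rw [add_zero]
    show (φ • a + v) - (2:F) • (t (φ • a + v)).2.2 = φ • a + v
    rw [h, smul_zero, sub_zero]
  · intro y hy
    have h : (t y).2.2 = y := by
      apply hγ y 0 0 y (Submodule.zero_mem _) hy
      rw [zero_smul, zero_add, zero_add]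
    show y - (2:F) • (t y).2.2 = -y
    rw [h, two_smul] ; abel
  · intro x
    refine ⟨(t x).1, ?_⟩
    have hx := (ht x).2.2
    have hα : a * (t x).2.1 = 0 := by
      have := (ht x).1 ; rw [mem_eigSp] at this ; rw [this, zero_smul]
    have hγm : a * (t x).2.2 = η • (t x).2.2 := (ht x).2.1
    have hsub : x - (x - (2:F) • (t x).2.2) = (2:F) • (t x).2.2 := by abel
    show a * x = (t x).1 • a + ((2:F)⁻¹ * η) • (x - (x - (2:F) • (t x).2.2))
    rw [hsub, smul_smul, mul_assoc, mul_comm η, ← mul_assoc, inv_mul_cancel₀ h2, one_mul]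
    calc a * x = a * ((t x).1 • a + (t x).2.1 + (t x).2.2) := by rw [← hx]
    _ = (t x).1 • (a * a) + a * (t x).2.1 + a * (t x).2.2 := by
        rw [mul_add, mul_add, mul_smul_comm]
    _ = (t x).1 • a + η • (t x).2.2 := by rw [ha.idem, hα, hγm, add_zero]

/-- if `A` is generated by a set `X` of primitive axes of Jordan type `η`
closed under the Miyamoto maps, then `A` is the `F`-linear span of `X`. -/
theorem spanned_by_closed_axis_set
    (h2 : (2 : F) ≠ 0) (η : F) (hη0 : η ≠ 0) (hη1 : η ≠ 1)
    (X : Set A) (haxes : ∀ a ∈ X, IsPrimitiveAxis η a)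
    (hclosed : ∀ b ∈ X, ∀ τ : A →ₗ[F] A, IsMiyamotoMap η b τ → ∀ x ∈ X, τ x ∈ X)
    (hgen : NonUnitalAlgebra.adjoin F X = ⊤) :
    Submodule.span F X = ⊤ := by
  have key : ∀ a ∈ X, ∀ b ∈ X, a * b ∈ Submodule.span F X := by
    intro a haX b hbX
    obtain ⟨τ, hτ, hprod⟩ := exists_miyamoto h2 (haxes a haX)
    obtain ⟨φ, hφ⟩ := hprod b
    have hτb : τ b ∈ X := hclosed a haX τ hτ b hbX
    rw [hφ]
    refine Submodule.add_mem _ (Submodule.smul_mem _ _ (Submodule.subset_span haX)) ?_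
    exact Submodule.smul_mem _ _ (Submodule.sub_mem _ (Submodule.subset_span hbX)
      (Submodule.subset_span hτb))
  have hmul : ∀ x ∈ Submodule.span F X, ∀ y ∈ Submodule.span F X,
      x * y ∈ Submodule.span F X := by
    intro x hx
    induction hx using Submodule.span_induction with
    | mem a haX =>
      intro y hy
      induction hy using Submodule.span_induction with
      | mem b hbX => exact key a haX b hbX
      | zero => simp
      | add u v _ _ hu hv => rw [mul_add] ; exact Submodule.add_mem _ hu hv
      | smul c u _ hu => rw [mul_smul_comm] ; exact Submodule.smul_mem _ _ hu
    | zero => intro y hy ; simp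
    | add u v _ _ hu hv =>
      intro y hy ; rw [add_mul] ; exact Submodule.add_mem _ (hu y hy) (hv y hy)
    | smul c u _ hu =>
      intro y hy ; rw [smul_mul_assoc] ; exact Submodule.smul_mem _ _ (hu y hy)
  let S : NonUnitalSubalgebra F A :=
    { Submodule.span F X with
      mul_mem' := fun {x y} hx hy => hmul x hx y hy }
  have : NonUnitalAlgebra.adjoin F X ≤ S := NonUnitalAlgebra.adjoin_le Submodule.subset_span
  rw [hgen] at this
  rw [eq_top_iff]
  intro x _
  exact this (by trivial)
end

section
/- The algebra B = B(η, φ) has an ideal other than 0 and B (i.e., fails to be simple) if and only if φ = η/(1−η) or φ = 0 or φ = 1. -/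
/-! Write `x = a c + b d + e ρ`. A direct computation gives `c (c x) - η (c x) = f(x) c` and
`d (d x) - η (d x) = g(x) d` for the linear forms `f = (1-η) a + (η+π) b + (1-η) π e` and
`g = (η+π) a + (1-η) b + (1-η) π e`. Hence a proper ideal contains neither `c` nor `d` once
`η + π ≠ 0` (since `f(d) = g(c) = η + π` and `ρ = cd - ηc - ηd`), so `f` and `g` vanish on it.
Applied to `x` and `c x` this forces `x = 0` unless `π (η + π) (1 - 2η - π) = 0`, i.e. unless
`φ = η/(1-η)`, `0` or `1`. In these three cases `F ρ`, `F (c d)` and the common kernel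
`span {c - d, π c - ρ}` of `f` and `g` are proper nonzero ideals. -/

open Submodule

theorem span_ne_top_of_card_lt {R M ι : Type*} [Ring R] [StrongRankCondition R]
    [AddCommGroup M] [Module R M] [Fintype ι] {v : ι → M} (hv : LinearIndependent R v)
    {S : Finset M} (hS : S.card < Fintype.card ι) : span R (S : Set M) ≠ ⊤ := fun h => by
  have := linearIndependent_le_span_finset v hv S h
  rw [Cardinal.mk_fintype] at this
  exact absurd (Nat.cast_le.1 this) (not_le.2 hS)

theorem LinearIndependent.eq_zero_of_triple {R M : Type*} [Ring R] [AddCommGroup M]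
    [Module R M] {x y z : M} (h : LinearIndependent R ![x, y, z]) {r s t : R}
    (h' : r • x + s • y + t • z = 0) : r = 0 ∧ s = 0 ∧ t = 0 := by
  have := Fintype.linearIndependent_iff.1 h ![r, s, t] (by simpa [Fin.sum_univ_three] using h')
  exact ⟨this 0, this 1, this 2⟩

theorem mul_mem_span_of_forall_mem {R A : Type*} [CommSemiring R] [NonUnitalNonAssocSemiring A]
    [Module R A] [SMulCommClass R A A] [IsScalarTower R A A] {S T : Set A}
    (hT : span R T = ⊤) (h : ∀ t ∈ T, ∀ s ∈ S, t * s ∈ span R S) (y : A) {x : A}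
    (hx : x ∈ span R S) : y * x ∈ span R S := by
  have hle : map₂ (LinearMap.mul R A) (span R T) (span R S) ≤ span R S := by
    rw [map₂_span_span, span_le]
    rintro _ ⟨t, ht, s, hs, rfl⟩
    exact h t ht s hs
  exact map₂_le.1 hle y (hT ▸ mem_top) x hx

theorem eq_zero_of_forms_eq_zero {F : Type*} [Field F] {η π a b e : F} (hπ : π ≠ 0)
    (hηπ : η + π ≠ 0) (h3 : 1 - 2 * η - π ≠ 0)
    (hf : (1 - η) * a + (η + π) * b + (1 - η) * π * e = 0)
    (hg : (η + π) * a + (1 - η) * b + (1 - η) * π * e = 0)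
    (hf' : (1 - η) * (a + η * b + π * e) + (η + π) * (η * b) + (1 - η) * π * b = 0)
    (hg' : (η + π) * (a + η * b + π * e) + (1 - η) * (η * b) + (1 - η) * π * b = 0) :
    a = 0 ∧ b = 0 ∧ e = 0 := by
  have hab : a = b := by
    have : (1 - 2 * η - π) * (a - b) = 0 := by linear_combination hf - hg
    exact sub_eq_zero.1 ((mul_eq_zero.1 this).resolve_left h3)
  have hae : a + π * e = 0 := by
    have : (1 - 2 * η - π) * (a + π * e) = 0 := by linear_combination hf' - hg'
    exact (mul_eq_zero.1 this).resolve_left h3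
  have he : e = 0 := by
    have : ((η + π) * π) * e = 0 := by
      linear_combination -hf - (η + π) * hab + (1 + π) * hae
    exact (mul_eq_zero.1 this).resolve_left (mul_ne_zero hηπ hπ)
  subst he
  exact ⟨by simpa using hae, by simpa [hab] using hae, rfl⟩

theorem phi_cases_iff {F : Type*} [Field F] {η φ π : F} (hη1 : η ≠ 1)
    (hπ : π = (1 - η) * φ - η) :
    (φ = η / (1 - η) ∨ φ = 0 ∨ φ = 1) ↔ (π = 0 ∨ η + π = 0 ∨ 1 - 2 * η - π = 0) := by
  have hη1' : 1 - η ≠ 0 := sub_ne_zero.2 hη1.symm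
  subst hπ
  refine or_congr ?_ (or_congr ?_ ?_)
  · rw [eq_div_iff hη1', sub_eq_zero, mul_comm]
  · rw [show η + ((1 - η) * φ - η) = (1 - η) * φ by ring, mul_eq_zero, or_iff_right hη1']
  · rw [show 1 - 2 * η - ((1 - η) * φ - η) = (1 - η) * (1 - φ) by ring, mul_eq_zero,
      or_iff_right hη1', sub_eq_zero, eq_comm]

section Algebra

variable {F B : Type*} [Field F] [NonUnitalNonAssocCommRing B] [Module F B]
  [SMulCommClass F B B] {η π : F} {c d ρ : B}

theorem mul_smul_add_smul_add_smul (hcc : c * c = c) (hcd : c * d = η • c + η • d + ρ)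
    (hcρ : c * ρ = π • c) (a b e : F) :
    c * (a • c + b • d + e • ρ) = (a + η * b + π * e) • c + (η * b) • d + b • ρ := by
  rw [mul_add, mul_add, mul_smul_comm, mul_smul_comm, mul_smul_comm, hcc, hcd, hcρ]
  module

theorem mul_mul_sub_smul_mul (hcc : c * c = c) (hcd : c * d = η • c + η • d + ρ)
    (hcρ : c * ρ = π • c) (a b e : F) :
    c * (c * (a • c + b • d + e • ρ)) - η • (c * (a • c + b • d + e • ρ)) =
      ((1 - η) * a + (η + π) * b + (1 - η) * π * e) • c := by
  rw [mul_smul_add_smul_add_smul hcc hcd hcρ, mul_smul_add_smul_add_smul hcc hcd hcρ]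
  module

variable {I : Submodule F B}

theorem smul_mem_of_mem (hI : ∀ y : B, ∀ i ∈ I, y * i ∈ I) (hcc : c * c = c)
    (hcd : c * d = η • c + η • d + ρ) (hcρ : c * ρ = π • c) {a b e : F}
    (hx : a • c + b • d + e • ρ ∈ I) :
    ((1 - η) * a + (η + π) * b + (1 - η) * π * e) • c ∈ I := by
  rw [← mul_mul_sub_smul_mul hcc hcd hcρ]
  exact I.sub_mem (hI _ _ (hI _ _ hx)) (I.smul_mem _ (hI _ _ hx))

theorem mem_of_mem_of_add_ne_zero (hI : ∀ y : B, ∀ i ∈ I, y * i ∈ I) (hcc : c * c = c)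
    (hcd : c * d = η • c + η • d + ρ) (hcρ : c * ρ = π • c) (hηπ : η + π ≠ 0) (hd : d ∈ I) :
    c ∈ I := by
  have := smul_mem_of_mem hI hcc hcd hcρ (a := 0) (b := 1) (e := 0) (by simpa using hd)
  simpa [I.smul_mem_iff hηπ] using this

theorem eq_top_of_mem (hspan : span F ({c, d, ρ} : Set B) = ⊤)
    (hI : ∀ y : B, ∀ i ∈ I, y * i ∈ I) (hcc : c * c = c) (hdd : d * d = d)
    (hcd : c * d = η • c + η • d + ρ) (hcρ : c * ρ = π • c) (hdρ : d * ρ = π • d)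
    (hηπ : η + π ≠ 0) (hcd_mem : c ∈ I ∨ d ∈ I) : I = ⊤ := by
  have hdc : d * c = η • d + η • c + ρ := by rw [mul_comm, hcd, add_comm (η • c)]
  have hc : c ∈ I := hcd_mem.elim id (mem_of_mem_of_add_ne_zero hI hcc hcd hcρ hηπ)
  have hd : d ∈ I := mem_of_mem_of_add_ne_zero hI hdd hdc hdρ hηπ hc
  have hρ : ρ ∈ I := by
    rw [show ρ = c * d - η • c - η • d by rw [hcd]; abel]
    exact I.sub_mem (I.sub_mem (hI c d hd) (I.smul_mem _ hc)) (I.smul_mem _ hd)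
  rw [eq_top_iff, ← hspan, span_le]
  simp [Set.insert_subset_iff, hc, hd, hρ]

theorem eq_bot_of_not_mem (hspan : span F ({c, d, ρ} : Set B) = ⊤)
    (hI : ∀ y : B, ∀ i ∈ I, y * i ∈ I) (hcc : c * c = c) (hdd : d * d = d)
    (hcd : c * d = η • c + η • d + ρ) (hcρ : c * ρ = π • c) (hdρ : d * ρ = π • d)
    (hπ0 : π ≠ 0) (hηπ : η + π ≠ 0) (h3 : 1 - 2 * η - π ≠ 0) (hc : c ∉ I) (hd : d ∉ I) :
    I = ⊥ := by
  have hdc : d * c = η • d + η • c + ρ := by rw [mul_comm, hcd, add_comm (η • c)]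
  have hforms : ∀ {a b e : F}, a • c + b • d + e • ρ ∈ I →
      (1 - η) * a + (η + π) * b + (1 - η) * π * e = 0 ∧
        (η + π) * a + (1 - η) * b + (1 - η) * π * e = 0 := by
    intro a b e hx
    constructor
    · by_contra hr
      exact hc ((I.smul_mem_iff hr).1 (smul_mem_of_mem hI hcc hcd hcρ hx))
    · by_contra hr
      rw [add_comm ((η + π) * a)] at hr
      exact hd ((I.smul_mem_iff hr).1
        (smul_mem_of_mem hI hdd hdc hdρ (by rwa [add_comm (b • d)])))
  rw [eq_bot_iff]
  intro x hx
  obtain ⟨a, b, e, rfl⟩ := mem_span_triple.1 (hspan ▸ mem_top : x ∈ span F {c, d, ρ})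
  have hcx := hI c _ hx
  rw [mul_smul_add_smul_add_smul hcc hcd hcρ] at hcx
  obtain ⟨hf, hg⟩ := hforms hx
  obtain ⟨hf', hg'⟩ := hforms hcx
  obtain ⟨rfl, rfl, rfl⟩ := eq_zero_of_forms_eq_zero hπ0 hηπ h3 hf hg hf' hg'
  simp

variable [IsScalarTower F B B]

theorem exists_ideal_of_pi_eq_zero (hind : LinearIndependent F ![c, d, ρ])
    (hspan : span F ({c, d, ρ} : Set B) = ⊤) (hcρ : c * ρ = π • c) (hdρ : d * ρ = π • d)
    (hρρ : ρ * ρ = π • ρ) (hπ : π = 0) :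
    ∃ I : Submodule F B, (∀ y : B, ∀ i ∈ I, y * i ∈ I) ∧ I ≠ ⊥ ∧ I ≠ ⊤ := by
  refine ⟨span F {ρ}, mul_mem_span_of_forall_mem hspan ?_, ?_, ?_⟩
  · simp [hcρ, hdρ, hρρ, hπ]
  · simpa using hind.ne_zero 2
  · simpa using span_ne_top_of_card_lt hind (S := {ρ}) (by simp)

theorem exists_ideal_of_add_pi_eq_zero (hind : LinearIndependent F ![c, d, ρ])
    (hspan : span F ({c, d, ρ} : Set B) = ⊤) (hcc : c * c = c) (hdd : d * d = d)
    (hcd : c * d = η • c + η • d + ρ) (hcρ : c * ρ = π • c) (hdρ : d * ρ = π • d)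
    (hρρ : ρ * ρ = π • ρ) (hπ : η + π = 0) :
    ∃ I : Submodule F B, (∀ y : B, ∀ i ∈ I, y * i ∈ I) ∧ I ≠ ⊥ ∧ I ≠ ⊤ := by
  obtain rfl : π = -η := by linear_combination hπ
  have hdc : d * c = η • c + η • d + ρ := by rw [mul_comm, hcd]
  have hc_cd : c * (c * d) = η • (c * d) := by
    rw [hcd, mul_add, mul_add, mul_smul_comm, mul_smul_comm, hcc, hcd, hcρ]; module
  have hd_cd : d * (c * d) = η • (c * d) := by
    rw [hcd, mul_add, mul_add, mul_smul_comm, mul_smul_comm, hdd, hdc, hdρ]; module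
  have hρ_cd : ρ * (c * d) = (-η) • (c * d) := by
    rw [hcd, mul_add, mul_add, mul_smul_comm, mul_smul_comm, mul_comm ρ c, mul_comm ρ d,
      hcρ, hdρ, hρρ]; module
  refine ⟨span F {c * d}, mul_mem_span_of_forall_mem hspan ?_, ?_, ?_⟩
  · simp [hc_cd, hd_cd, hρ_cd, smul_mem _ _ (mem_span_singleton_self (c * d))]
  · rw [Ne, span_singleton_eq_bot, hcd]
    intro h0
    exact one_ne_zero (hind.eq_zero_of_triple (r := η) (s := η) (t := 1) (by rwa [one_smul])).2.2
  · simpa using span_ne_top_of_card_lt hind (S := {c * d}) (by simp)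

theorem exists_ideal_of_one_sub_two_mul_sub_pi_eq_zero (hind : LinearIndependent F ![c, d, ρ])
    (hspan : span F ({c, d, ρ} : Set B) = ⊤) (hcc : c * c = c) (hdd : d * d = d)
    (hcd : c * d = η • c + η • d + ρ) (hcρ : c * ρ = π • c) (hdρ : d * ρ = π • d)
    (hρρ : ρ * ρ = π • ρ) (hπ : 1 - 2 * η - π = 0) :
    ∃ I : Submodule F B, (∀ y : B, ∀ i ∈ I, y * i ∈ I) ∧ I ≠ ⊥ ∧ I ≠ ⊤ := by
  obtain rfl : π = 1 - 2 * η := by linear_combination -hπ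
  have hdc : d * c = η • c + η • d + ρ := by rw [mul_comm, hcd]
  refine ⟨span F {c - d, (1 - 2 * η) • c - ρ}, mul_mem_span_of_forall_mem hspan ?_, ?_, ?_⟩
  · simp only [Set.mem_insert_iff, Set.mem_singleton_iff, forall_eq_or_imp, forall_eq,
      mem_span_pair, mul_sub, mul_smul_comm, hcc, hdd, hcd, hdc, hcρ, hdρ, hρρ, mul_comm ρ]
    refine ⟨⟨⟨η, 1, ?_⟩, ⟨0, 0, ?_⟩⟩,
      ⟨⟨1 - η, -1, ?_⟩, ⟨(1 - 2 * η) * (1 - η), -(1 - 2 * η), ?_⟩⟩,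
      ⟨⟨1 - 2 * η, 0, ?_⟩, ⟨0, 1 - 2 * η, ?_⟩⟩⟩ <;> module
  · have hcd_ne : c ≠ d := by simpa using hind.injective.ne (show (0 : Fin 3) ≠ 1 by decide)
    simp [sub_eq_zero, hcd_ne]
  · classical
    simpa using span_ne_top_of_card_lt hind (S := {c - d, (1 - 2 * η) • c - ρ})
      ((Finset.card_le_two).trans_lt (by norm_num))

end Algebra

theorem B_eta_phi_simplicity_general
    {F B : Type*} [Field F] [NonUnitalNonAssocCommRing B] [Module F B]
    [SMulCommClass F B B] [IsScalarTower F B B]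
    (η φ π : F) (hη1 : η ≠ 1)
    (hπ : π = (1 - η) * φ - η)
    (c d ρ : B)
    (hind : LinearIndependent F ![c, d, ρ])
    (hspan : Submodule.span F ({c, d, ρ} : Set B) = ⊤)
    (hcc : c * c = c) (hdd : d * d = d)
    (hcd : c * d = η • c + η • d + ρ)
    (hcρ : c * ρ = π • c) (hdρ : d * ρ = π • d) (hρρ : ρ * ρ = π • ρ) :
    (∃ I : Submodule F B, (∀ y : B, ∀ i ∈ I, y * i ∈ I) ∧ I ≠ ⊥ ∧ I ≠ ⊤) ↔
      (φ = η / (1 - η) ∨ φ = 0 ∨ φ = 1) := by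
  rw [phi_cases_iff hη1 hπ]
  constructor
  · rintro ⟨I, hI, hbot, htop⟩
    by_contra! hπ'
    obtain ⟨hπ0, hηπ, h3⟩ := hπ'
    by_cases hmem : c ∈ I ∨ d ∈ I
    · exact htop (eq_top_of_mem hspan hI hcc hdd hcd hcρ hdρ hηπ hmem)
    · obtain ⟨hc, hd⟩ := not_or.1 hmem
      exact hbot (eq_bot_of_not_mem hspan hI hcc hdd hcd hcρ hdρ hπ0 hηπ h3 hc hd)
  · rintro (h | h | h)
    · exact exists_ideal_of_pi_eq_zero hind hspan hcρ hdρ hρρ h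
    · exact exists_ideal_of_add_pi_eq_zero hind hspan hcc hdd hcd hcρ hdρ hρρ h
    · exact exists_ideal_of_one_sub_two_mul_sub_pi_eq_zero hind hspan hcc hdd hcd hcρ hdρ hρρ h

/-- the algebra `B = B(η, φ)` — the commutative `F`-algebra with basis
`{c, d, ρ}` and multiplication `c·c = c`, `d·d = d`, `c·d = η•c + η•d + ρ`, `c·ρ = π•c`,
`d·ρ = π•d`, `ρ·ρ = π•ρ` where `π = (1−η)φ − η` — has an ideal other than `0` and `B`
(i.e. fails to be simple) if and only if `φ = η/(1−η)` or `φ = 0` or `φ = 1`. -/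
theorem B_eta_phi_simplicity
    {F B : Type*} [Field F] [NonUnitalNonAssocCommRing B] [Module F B]
    [SMulCommClass F B B] [IsScalarTower F B B]
    (h2 : (2 : F) ≠ 0) (η φ π : F) (hη0 : η ≠ 0) (hη1 : η ≠ 1)
    (hπ : π = (1 - η) * φ - η)
    (c d ρ : B)
    (hind : LinearIndependent F ![c, d, ρ])
    (hspan : Submodule.span F ({c, d, ρ} : Set B) = ⊤)
    (hcc : c * c = c) (hdd : d * d = d)
    (hcd : c * d = η • c + η • d + ρ)
    (hcρ : c * ρ = π • c) (hdρ : d * ρ = π • d) (hρρ : ρ * ρ = π • ρ) :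
    (∃ I : Submodule F B, (∀ y : B, ∀ i ∈ I, y * i ∈ I) ∧ I ≠ ⊥ ∧ I ≠ ⊤) ↔
      (φ = η / (1 - η) ∨ φ = 0 ∨ φ = 1) :=
  B_eta_phi_simplicity_general η φ π hη1 hπ c d ρ hind hspan hcc hdd hcd hcρ hdρ hρρ
end
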